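/- For every s-step reasoning chain a, every permutation σ of {1,…,s}, every reasoning start x(2s+1) = (a m₀).1, every L with 2^(L−1) ≤ s, and every m ≥ 1 with m₀ + m − 1 ≤ s: if (a (m₀+t)).2 ∈ V^L_(2s+1) for all 0 ≤ t ≤ m−1 (i.e., the final position resolves m consecutive reasoning steps from the start after L layers), then m ≤ (3^(L−1)−1)/2. -/
import Mathlib


/-- An `s`-step reasoning chain, with pairs indexed by `1, …, s`:
entries of a pair differ, consecutive pairs link up, and there are no loops. -/
def IsChainOn (s : ℤ) (a : ℤ → ℤ × ℤ) : Prop :=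
  (∀ i, 1 ≤ i → i ≤ s → (a i).1 ≠ (a i).2) ∧
  (∀ i, 1 ≤ i → i ≤ s - 1 → (a i).2 = (a (i + 1)).1) ∧
  (∀ i j, 1 ≤ i → i ≤ j → j ≤ s → (a i).1 ≠ (a j).2)

/-- `x` is the `s`-step reasoning sequence built from the chain `a` and a
permutation `σ` of `{1, …, s}`. -/
def IsSeqOn (s : ℤ) (a : ℤ → ℤ × ℤ) (σ : ℤ → ℤ) (x : ℤ → ℤ) : Prop :=
  Set.BijOn σ (Set.Icc 1 s) (Set.Icc 1 s) ∧
  ∀ m : ℤ, 1 ≤ m → m ≤ s → x (2 * m - 1) = (a (σ m)).1 ∧ x (2 * m) = (a (σ m)).2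

/-- Value sets of maximal masked information propagation on the (finite, positions
`≥ 1`) sequence `x`: layer 0 is the token itself, layer 1 performs adjacent position
matching into even positions, and higher layers perform same-token matching from
all earlier positions `j` with `1 ≤ j < i`. -/
def valueSetM (x : ℤ → ℤ) : ℕ → ℤ → Set ℤ
  | 0, i => {x i}
  | 1, i => if Even i then {x (i - 1), x i} else {x i}
  | l + 2, i =>
      valueSetM x (l + 1) i ∪
        ⋃ (j : ℤ)
          (_ : 1 ≤ j ∧ j < i ∧ (valueSetM x (l + 1) j ∩ valueSetM x (l + 1) i).Nonempty),
          valueSetM x (l + 1) j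

def chainVal (a : ℤ → ℤ × ℤ) (k : ℤ) : ℤ := if 1 ≤ k then (a k).2 else (a 1).1

lemma valueSetM_one (x : ℤ → ℤ) (i : ℤ) :
    valueSetM x 1 i = if Even i then {x (i - 1), x i} else {x i} := rfl

lemma valueSetM_succ_succ (x : ℤ → ℤ) (l : ℕ) (i : ℤ) :
    valueSetM x (l + 2) i = valueSetM x (l + 1) i ∪
      ⋃ (j : ℤ)
        (_ : 1 ≤ j ∧ j < i ∧ (valueSetM x (l + 1) j ∩ valueSetM x (l + 1) i).Nonempty),
        valueSetM x (l + 1) j := rfl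

lemma chainVal_snd (a : ℤ → ℤ × ℤ) {k : ℤ} (hk : 1 ≤ k) : chainVal a k = (a k).2 := if_pos hk

lemma chainVal_fst {s : ℤ} {a : ℤ → ℤ × ℤ} (ha : IsChainOn s a) {k : ℤ}
    (hk1 : 1 ≤ k) (hks : k ≤ s) : chainVal a (k - 1) = (a k).1 := by
  rcases eq_or_lt_of_le hk1 with h | h
  · rw [← h]; simp [chainVal]
  · have h1 : (1:ℤ) ≤ k - 1 := by omega
    rw [chainVal_snd a h1, ha.2.1 (k - 1) h1 (by omega), sub_add_cancel]

lemma chainVal_inj {s : ℤ} {a : ℤ → ℤ × ℤ} (ha : IsChainOn s a) {p q : ℤ}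
    (hp0 : 0 ≤ p) (hps : p ≤ s) (hq0 : 0 ≤ q) (hqs : q ≤ s)
    (h : chainVal a p = chainVal a q) : p = q := by
  have key : ∀ u v : ℤ, 0 ≤ u → u < v → v ≤ s → chainVal a u ≠ chainVal a v := by
    intro u v hu huv hvs
    rw [chainVal_snd a (by omega : (1:ℤ) ≤ v)]
    rcases eq_or_lt_of_le hu with h0 | h1
    · rw [← h0]
      simp only [chainVal, if_neg (by omega : ¬ (1:ℤ) ≤ (0:ℤ))]
      exact ha.2.2 1 v le_rfl (by omega) hvs
    · rw [chainVal_snd a (by omega : (1:ℤ) ≤ u), ha.2.1 u (by omega) (by omega)]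
      exact ha.2.2 (u + 1) v (by omega) (by omega) hvs
  rcases lt_trichotomy p q with hlt | he | hgt
  · exact absurd h (key p q hp0 hlt hqs)
  · exact he
  · exact absurd h.symm (key q p hq0 hgt hps)

lemma seq_val {s : ℤ} {a : ℤ → ℤ × ℤ} {σ x : ℤ → ℤ}
    (ha : IsChainOn s a) (hx : IsSeqOn s a σ x)
    {n : ℤ} (hn1 : 1 ≤ n) (hns : n ≤ s) :
    (1 ≤ σ n ∧ σ n ≤ s) ∧ x (2 * n - 1) = chainVal a (σ n - 1) ∧
      x (2 * n) = chainVal a (σ n) := by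
  have hσ := hx.1.1 (Set.mem_Icc.mpr ⟨hn1, hns⟩)
  rw [Set.mem_Icc] at hσ
  obtain ⟨e1, e2⟩ := hx.2 n hn1 hns
  exact ⟨hσ, by rw [e1, chainVal_fst ha hσ.1 hσ.2], by rw [e2, chainVal_snd a hσ.1]⟩

lemma claim1 {s : ℤ} {a : ℤ → ℤ × ℤ} {σ x : ℤ → ℤ}
    (ha : IsChainOn s a) (hx : IsSeqOn s a σ x) :
    ∀ l : ℕ, ∀ i : ℤ, 1 ≤ i → i ≤ 2 * s →
      ∃ p q : ℤ, 0 ≤ p ∧ q ≤ s ∧ q ≤ p + 3 ^ l ∧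
        valueSetM x (l + 1) i ⊆ chainVal a '' Set.Icc p q := by
  intro l
  induction l with
  | zero =>
    intro i hi1 hi2
    rcases Int.even_or_odd i with he | ho
    · obtain ⟨n, rfl⟩ := he
      have hn1 : 1 ≤ n := by omega
      have hns : n ≤ s := by omega
      obtain ⟨hσ, e1, e2⟩ := seq_val ha hx hn1 hns
      refine ⟨σ n - 1, σ n, by omega, hσ.2, by norm_num, ?_⟩
      rw [valueSetM_one, if_pos ⟨n, rfl⟩]
      have e1' : x (n + n - 1) = chainVal a (σ n - 1) := by
        rw [show n + n - 1 = 2 * n - 1 by ring]; exact e1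
      have e2' : x (n + n) = chainVal a (σ n) := by
        rw [show n + n = 2 * n by ring]; exact e2
      intro y hy
      simp only [Set.mem_insert_iff, Set.mem_singleton_iff] at hy
      rcases hy with h | h
      · exact ⟨σ n - 1, Set.mem_Icc.mpr ⟨le_refl _, by omega⟩, by rw [← e1', h]⟩
      · exact ⟨σ n, Set.mem_Icc.mpr ⟨by omega, le_refl _⟩, by rw [← e2', h]⟩
    · obtain ⟨n, rfl⟩ := ho
      have hn1 : 1 ≤ n + 1 := by omega
      have hns : n + 1 ≤ s := by omega
      obtain ⟨hσ, e1, _⟩ := seq_val ha hx hn1 hns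
      refine ⟨σ (n + 1) - 1, σ (n + 1) - 1, by omega, by omega, by norm_num, ?_⟩
      rw [valueSetM_one, if_neg (by rw [Int.even_iff]; omega)]
      have e1' : x (2 * n + 1) = chainVal a (σ (n + 1) - 1) := by
        rw [show 2 * n + 1 = 2 * (n + 1) - 1 by ring]; exact e1
      intro y hy
      simp only [Set.mem_singleton_iff] at hy
      exact ⟨σ (n + 1) - 1, Set.mem_Icc.mpr ⟨le_refl _, le_refl _⟩, by rw [← e1', hy]⟩
  | succ l ih =>
    intro i hi1 hi2
    obtain ⟨p, q, hp0, hqs, hpq, hsub⟩ := ih i hi1 hi2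
    have ht : (0:ℤ) < 3 ^ l := by positivity
    have h3 : (3:ℤ) ^ (l + 1) = 3 * 3 ^ l := by rw [pow_succ]; ring
    refine ⟨max 0 (p - 3 ^ l), min s (q + 3 ^ l), le_max_left _ _, min_le_left _ _,
      by omega, ?_⟩
    rw [valueSetM_succ_succ]
    intro y hy
    rcases hy with hy | hy
    · obtain ⟨k, hk, hke⟩ := hsub hy
      rw [Set.mem_Icc] at hk
      exact ⟨k, Set.mem_Icc.mpr ⟨by omega, by omega⟩, hke⟩
    · simp only [Set.mem_iUnion] at hy
      obtain ⟨j, ⟨hj1, hji, v, hvj, hvi⟩, hyj⟩ := hy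
      obtain ⟨pj, qj, hpj0, hqjs, hpqj, hsubj⟩ := ih j hj1 (by omega)
      obtain ⟨k1, hk1, hk1e⟩ := hsubj hvj
      obtain ⟨k2, hk2, hk2e⟩ := hsub hvi
      rw [Set.mem_Icc] at hk1 hk2
      have hkk : k1 = k2 := chainVal_inj ha (by omega) (by omega) (by omega) (by omega)
        (by rw [hk1e, hk2e])
      obtain ⟨ky, hky, hkye⟩ := hsubj hyj
      rw [Set.mem_Icc] at hky
      exact ⟨ky, Set.mem_Icc.mpr ⟨by omega, by omega⟩, hkye⟩

lemma claim2 {s : ℤ} {a : ℤ → ℤ × ℤ} {σ x : ℤ → ℤ} {m₀ : ℤ}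
    (ha : IsChainOn s a) (hx : IsSeqOn s a σ x)
    (hm₀ : 1 ≤ m₀ ∧ m₀ ≤ s) (hstart : x (2 * s + 1) = (a m₀).1) :
    ∀ l : ℕ, ∃ R : ℤ, 0 ≤ R ∧ 2 * R = 3 ^ l - 1 ∧
      valueSetM x (l + 1) (2 * s + 1) ⊆
        chainVal a '' Set.Icc (max 0 (m₀ - 1 - R)) (min s (m₀ - 1 + R)) := by
  intro l
  induction l with
  | zero =>
    refine ⟨0, le_refl _, by norm_num, ?_⟩
    rw [valueSetM_one, if_neg (by rw [Int.even_iff]; omega)]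
    intro y hy
    simp only [Set.mem_singleton_iff] at hy
    have e : x (2 * s + 1) = chainVal a (m₀ - 1) := by
      rw [hstart, chainVal_fst ha hm₀.1 hm₀.2]
    exact ⟨m₀ - 1, Set.mem_Icc.mpr ⟨by omega, by omega⟩, by rw [← e, hy]⟩
  | succ l ih =>
    obtain ⟨R, hR0, hR, hsub⟩ := ih
    have ht : (0:ℤ) < 3 ^ l := by positivity
    have h3 : (3:ℤ) ^ (l + 1) = 3 * 3 ^ l := by rw [pow_succ]; ring
    refine ⟨R + 3 ^ l, by omega, by omega, ?_⟩
    rw [valueSetM_succ_succ]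
    intro y hy
    rcases hy with hy | hy
    · obtain ⟨k, hk, hke⟩ := hsub hy
      rw [Set.mem_Icc] at hk
      exact ⟨k, Set.mem_Icc.mpr ⟨by omega, by omega⟩, hke⟩
    · simp only [Set.mem_iUnion] at hy
      obtain ⟨j, ⟨hj1, hji, v, hvj, hvi⟩, hyj⟩ := hy
      obtain ⟨pj, qj, hpj0, hqjs, hpqj, hsubj⟩ := claim1 ha hx l j hj1 (by omega)
      obtain ⟨k1, hk1, hk1e⟩ := hsubj hvj
      obtain ⟨k2, hk2, hk2e⟩ := hsub hvi
      rw [Set.mem_Icc] at hk1 hk2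
      have hkk : k1 = k2 := chainVal_inj ha (by omega) (by omega) (by omega) (by omega)
        (by rw [hk1e, hk2e])
      obtain ⟨ky, hky, hkye⟩ := hsubj hyj
      rw [Set.mem_Icc] at hky
      exact ⟨ky, Set.mem_Icc.mpr ⟨by omega, by omega⟩, hkye⟩

/-- if after `L` layers the final position resolves `m` consecutive
reasoning steps from the reasoning start, then `m ≤ (3^(L-1) - 1) / 2`,
i.e. `2 * m ≤ 3^(L-1) - 1`. -/
theorem resolved_steps_upper_bound
    (s : ℤ) (hs : 1 ≤ s) (a : ℤ → ℤ × ℤ) (σ : ℤ → ℤ) (x : ℤ → ℤ) (m₀ : ℤ)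
    (ha : IsChainOn s a) (hx : IsSeqOn s a σ x)
    (hm₀ : 1 ≤ m₀ ∧ m₀ ≤ s) (hstart : x (2 * s + 1) = (a m₀).1)
    (L : ℕ) (hL : 1 ≤ L) (hLs : (2 : ℤ) ^ (L - 1) ≤ s)
    (m : ℤ) (hm : 1 ≤ m) (hms : m₀ + m - 1 ≤ s)
    (hres : ∀ t : ℤ, 0 ≤ t → t ≤ m - 1 →
      (a (m₀ + t)).2 ∈ valueSetM x L (2 * s + 1)) :
    2 * m ≤ 3 ^ (L - 1) - 1 := by
  obtain ⟨l, rfl⟩ : ∃ l, L = l + 1 := ⟨L - 1, by omega⟩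
  obtain ⟨R, hR0, hR, hsub⟩ := claim2 ha hx hm₀ hstart l
  have ht := hres (m - 1) (by omega) (by omega)
  rw [show m₀ + (m - 1) = m₀ + m - 1 by ring] at ht
  obtain ⟨k, hk, hke⟩ := hsub ht
  rw [Set.mem_Icc] at hk
  have heq : k = m₀ + m - 1 := chainVal_inj ha (by omega) (by omega) (by omega) (by omega)
    (by rw [hke, chainVal_snd a (by omega : (1:ℤ) ≤ m₀ + m - 1)])
  have h31 : (3:ℤ) ^ (l + 1 - 1) = 3 ^ l := by norm_num
  omega
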